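/- arXiv:2412.03479 — 8 statements merged into one kernel-verified Lean document; each statement's English description precedes it below -/
import Mathlib

section
/- For every integer k ≥ 2 and every lattice point x = (x₁,x₂,x₃,x₄) ∈ ℤ⁴ with each |xᵢ| ≤ k, if x₁² + x₂² ≠ 0 and x₂x₃ − x₁x₄ ≠ 0, then |x₂x₃ − x₁x₄| / √(x₁² + x₂²) ≥ 1 / √((k−1)² + k²). -/
theorem stmt_0 (k x₁ x₂ x₃ x₄ : ℤ) (hk : 2 ≤ k)
    (h1 : |x₁| ≤ k) (h2 : |x₂| ≤ k) (h3 : |x₃| ≤ k) (h4 : |x₄| ≤ k)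
    (hden : x₁ ^ 2 + x₂ ^ 2 ≠ 0) (hnum : x₂ * x₃ - x₁ * x₄ ≠ 0) :
    |(x₂ : ℝ) * x₃ - x₁ * x₄| / Real.sqrt ((x₁ : ℝ) ^ 2 + (x₂ : ℝ) ^ 2) ≥
      1 / Real.sqrt (((k : ℝ) - 1) ^ 2 + (k : ℝ) ^ 2) := by
  have hkR : (2:ℝ) ≤ (k:ℝ) := by exact_mod_cast hk
  set s := Real.sqrt ((x₁ : ℝ) ^ 2 + (x₂ : ℝ) ^ 2) with hs
  set t := Real.sqrt (((k : ℝ) - 1) ^ 2 + (k : ℝ) ^ 2) with ht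
  have hdpos : (0:ℝ) < (x₁ : ℝ) ^ 2 + (x₂ : ℝ) ^ 2 := by
    have : (0:ℤ) < x₁ ^ 2 + x₂ ^ 2 := by
      rcases lt_or_eq_of_le (by positivity : (0:ℤ) ≤ x₁^2 + x₂^2) with h | h
      · exact h
      · exact absurd h.symm hden
    exact_mod_cast this
  have hspos : 0 < s := Real.sqrt_pos.mpr hdpos
  have htpos : 0 < t := Real.sqrt_pos.mpr (by nlinarith)
  have hs2 : s ^ 2 = (x₁ : ℝ) ^ 2 + (x₂ : ℝ) ^ 2 := Real.sq_sqrt hdpos.le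
  have ht2 : t ^ 2 = ((k : ℝ) - 1) ^ 2 + (k : ℝ) ^ 2 := Real.sq_sqrt (by nlinarith)
  set A := |(x₂ : ℝ) * x₃ - x₁ * x₄| with hA
  have hAcast : A = ((|x₂ * x₃ - x₁ * x₄| : ℤ) : ℝ) := by push_cast; rfl
  rw [ge_iff_le, div_le_div_iff₀ htpos hspos]
  -- goal : 1 * s ≤ A * t
  rw [one_mul]
  by_cases hcase : x₁ ^ 2 + x₂ ^ 2 ≤ (k - 1) ^ 2 + k ^ 2
  · have hA1 : (1:ℝ) ≤ A := by
      rw [hAcast]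
      exact_mod_cast Int.one_le_abs hnum
    have hst : s ≤ t := by
      apply Real.sqrt_le_sqrt
      have : ((x₁:ℝ)^2 + (x₂:ℝ)^2) ≤ ((k:ℝ) - 1)^2 + (k:ℝ)^2 := by exact_mod_cast hcase
      linarith
    nlinarith
  · push_neg at hcase
    -- then |x₁| = k and |x₂| = k
    have hx1 : |x₁| = k := by
      by_contra h
      have : |x₁| ≤ k - 1 := by omega
      have h2' : x₂ ^ 2 ≤ k ^ 2 := by
        have := abs_le.mp h2; nlinarith
      have : x₁ ^ 2 ≤ (k-1) ^ 2 := by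
        have h0 : (0:ℤ) ≤ |x₁| := abs_nonneg _
        nlinarith [sq_abs x₁]
      linarith
    have hx2 : |x₂| = k := by
      by_contra h
      have : |x₂| ≤ k - 1 := by omega
      have h1' : x₁ ^ 2 ≤ k ^ 2 := by
        have := abs_le.mp h1; nlinarith
      have : x₂ ^ 2 ≤ (k-1) ^ 2 := by
        have h0 : (0:ℤ) ≤ |x₂| := abs_nonneg _
        nlinarith [sq_abs x₂]
      linarith
    have hdvd : k ∣ (x₂ * x₃ - x₁ * x₄) := by
      have d1 : k ∣ x₁ := hx1 ▸ (abs_dvd x₁ x₁).mpr dvd_rfl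
      have d2 : k ∣ x₂ := hx2 ▸ (abs_dvd x₂ x₂).mpr dvd_rfl
      exact dvd_sub (dvd_mul_of_dvd_left d2 _) (dvd_mul_of_dvd_left d1 _)
    have hAk : (k:ℝ) ≤ A := by
      rw [hAcast]
      have : k ≤ |x₂ * x₃ - x₁ * x₄| := Int.le_of_dvd (abs_pos.mpr hnum) ((dvd_abs _ _).mpr hdvd)
      exact_mod_cast this
    have hs2' : s ^ 2 = 2 * (k:ℝ) ^ 2 := by
      have e1 : x₁ ^ 2 = k ^ 2 := by rw [← sq_abs, hx1]
      have e2 : x₂ ^ 2 = k ^ 2 := by rw [← sq_abs, hx2]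
      have e1R : (x₁:ℝ)^2 = (k:ℝ)^2 := by exact_mod_cast e1
      have e2R : (x₂:ℝ)^2 = (k:ℝ)^2 := by exact_mod_cast e2
      rw [hs2, e1R, e2R]; ring
    have ht2' : (2:ℝ) ≤ t ^ 2 := by rw [ht2]; nlinarith
    -- s² = 2k² ≤ k² t² ≤ A² t² = (A t)², so s ≤ A t
    have hAnn : 0 ≤ A := abs_nonneg _
    have hsq : s ^ 2 ≤ (A * t) ^ 2 := by
      have h1' : (k:ℝ) ^ 2 * t ^ 2 ≤ A ^ 2 * t ^ 2 := by
        apply mul_le_mul_of_nonneg_right _ (sq_nonneg t)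
        nlinarith
      nlinarith
    calc s = Real.sqrt (s ^ 2) := (Real.sqrt_sq hspos.le).symm
      _ ≤ Real.sqrt ((A * t) ^ 2) := Real.sqrt_le_sqrt hsq
      _ = A * t := Real.sqrt_sq (by positivity)
end

section
/- Define ε(d,k) as the minimum positive distance d(P,Q) over all pairs of disjoint polytopes P, Q that are convex hulls of finite subsets of {0,1,…,k}^d. Then ε(2,k) = 1/√((k−1)² + k²) for every integer k ≥ 2. -/
/-- The infimum of Euclidean distances between points of two sets. -/
noncomputable def setDist {E : Type*} [PseudoMetricSpace E] (P Q : Set E) : ℝ :=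
  sInf (Set.image2 dist P Q)

/-- A finite set of vertices with integer coordinates in `[0, k]`. -/
def IsLatticeVertexSet (d k : ℕ) (V : Finset (EuclideanSpace ℝ (Fin d))) : Prop :=
  ∀ p ∈ V, ∀ i, ∃ n : ℕ, n ≤ k ∧ p i = (n : ℝ)

/-- The smallest distance between two disjoint lattice `(d,k)`-polytopes. -/
noncomputable def eps (d k : ℕ) : ℝ :=
  sInf {r : ℝ | ∃ V W : Finset (EuclideanSpace ℝ (Fin d)),
    V.Nonempty ∧ W.Nonempty ∧ IsLatticeVertexSet d k V ∧ IsLatticeVertexSet d k W ∧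
    Disjoint (convexHull ℝ (V : Set (EuclideanSpace ℝ (Fin d))))
      (convexHull ℝ (W : Set (EuclideanSpace ℝ (Fin d)))) ∧
    r = setDist (convexHull ℝ (V : Set (EuclideanSpace ℝ (Fin d))))
      (convexHull ℝ (W : Set (EuclideanSpace ℝ (Fin d))))}

/-!
The point `(1, 1)` and the segment from `0` to `(k, k - 1)` are disjoint lattice polytopes at
distance `1 / √((k - 1)² + k²)`, because the determinant of `(1, 1)` and `(k, k - 1)` is `1`.

Conversely, let `p ∈ P`, `q ∈ Q` be a closest pair of points of two disjoint lattice polygons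
and `v = q - p`. Then `p` lies in the convex hull of the vertices of `P` maximising `⟪v, ·⟫`,
and `q` in that of the vertices of `Q` minimising it. If both of these faces are single
vertices, `v` is a nonzero lattice vector. Otherwise one of them contains two vertices whose
difference `w` is a lattice vector orthogonal to `v` with coordinates in `[-k, k]`, and for
vertices `a`, `b` of the two faces `‖v‖ ‖w‖ = |det (w, b - a)| ≥ 1`. If `|w₀| ≠ |w₁|` then
`‖w‖² ≤ (k - 1)² + k²`; if `|w₀| = |w₁| = m` then `m` divides the determinant and
`‖v‖ ≥ 1 / √2` instead.
-/

open RealInnerProductSpace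

local notation "ℝ²" => EuclideanSpace ℝ (Fin 2)

theorem eq_or_exists_ne_of_mem_convexHull {𝕜 E : Type*} [Semiring 𝕜] [PartialOrder 𝕜]
    [AddCommMonoid E] [Module 𝕜 E] {s : Set E} {p : E} (hp : p ∈ convexHull 𝕜 s) (a : E) :
    p = a ∨ ∃ b ∈ s, b ≠ a := by
  by_contra! h
  have hs : s ⊆ {a} := fun b hb => h.2 b hb
  exact h.1 (by simpa using convexHull_mono hs hp)

section ConvexHull

variable {𝕜 E : Type*} [Field 𝕜] [LinearOrder 𝕜] [IsStrictOrderedRing 𝕜]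
  [AddCommGroup E] [Module 𝕜 E]

theorem mem_convexHull_filter_of_forall_le {s : Finset E} {f : E →ₗ[𝕜] 𝕜} {p : E}
    (hp : p ∈ convexHull 𝕜 (s : Set E)) (hf : ∀ x ∈ s, f x ≤ f p) :
    p ∈ convexHull 𝕜 (s.filter (f · = f p) : Set E) := by
  obtain ⟨w, hw₀, hw₁, hwp⟩ := Finset.mem_convexHull'.1 hp
  have hslack : ∑ y ∈ s, w y * (f p - f y) = 0 := by
    have hfp : ∑ y ∈ s, w y * f y = f p := by simp only [← hwp, map_sum, map_smul, smul_eq_mul]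
    simp only [mul_sub, Finset.sum_sub_distrib, ← Finset.sum_mul, hw₁, one_mul, hfp, sub_self]
  have hface : ∀ y ∈ s, w y ≠ 0 → f y = f p := fun y hy hwy =>
    (sub_eq_zero.1 <| (mul_eq_zero.1 <| (Finset.sum_eq_zero_iff_of_nonneg fun y hy =>
      mul_nonneg (hw₀ y hy) (sub_nonneg.2 (hf y hy))).1 hslack y hy).resolve_left hwy).symm
  refine Finset.mem_convexHull'.2 ⟨w, fun y hy => hw₀ y (Finset.mem_filter.1 hy).1, ?_, ?_⟩
  · rw [Finset.sum_filter_of_ne hface, hw₁]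
  · rw [Finset.sum_filter_of_ne fun y hy hwy => hface y hy (left_ne_zero_of_smul hwy), hwp]

end ConvexHull

section Distance

variable {α : Type*} [PseudoMetricSpace α]

theorem exists_forall_dist_le_of_isCompact {P Q : Set α} (hP : IsCompact P) (hQ : IsCompact Q)
    (hP₀ : P.Nonempty) (hQ₀ : Q.Nonempty) :
    ∃ p ∈ P, ∃ q ∈ Q, ∀ x ∈ P, ∀ y ∈ Q, dist p q ≤ dist x y := by
  obtain ⟨⟨p, q⟩, ⟨hp, hq⟩, hmin⟩ :=
    (hP.prod hQ).exists_isMinOn (hP₀.prod hQ₀) continuous_dist.continuousOn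
  exact ⟨p, hp, q, hq, fun x hx y hy => isMinOn_iff.1 hmin (x, y) ⟨hx, hy⟩⟩

theorem setDist_eq_dist {P Q : Set α} {p q : α} (hp : p ∈ P) (hq : q ∈ Q)
    (h : ∀ x ∈ P, ∀ y ∈ Q, dist p q ≤ dist x y) : setDist P Q = dist p q :=
  IsLeast.csInf_eq ⟨Set.mem_image2_of_mem hp hq, fun _ hr => Set.forall_mem_image2.2 h _ hr⟩

end Distance

theorem inner_le_inner_of_forall_dist_le {E : Type*} [NormedAddCommGroup E]
    [InnerProductSpace ℝ E] {K : Set E} (hK : Convex ℝ K) {p q x : E} (hp : p ∈ K)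
    (h : ∀ y ∈ K, dist q p ≤ dist q y) (hx : x ∈ K) : ⟪q - p, x⟫ ≤ ⟪q - p, p⟫ := by
  have : Nonempty K := ⟨⟨p, hp⟩⟩
  have hinf : ‖q - p‖ = ⨅ y : K, ‖q - y‖ :=
    le_antisymm (le_ciInf fun y => by simpa only [dist_eq_norm] using h y y.2)
      (ciInf_le (f := fun y : K => ‖q - y‖) ⟨0, Set.forall_mem_range.2 fun _ => norm_nonneg _⟩
        ⟨p, hp⟩)
  have := (norm_eq_iInf_iff_real_inner_le_zero hK hp).1 hinf x hx
  rw [inner_sub_right] at this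
  linarith

theorem one_div_sqrt_le_of_one_le_mul_sq {N x : ℝ} (hx : 0 ≤ x) (h : 1 ≤ N * x ^ 2) :
    1 / √N ≤ x := by
  have hN : 0 < N := by
    by_contra! hN
    nlinarith [sq_nonneg x]
  rw [div_le_iff₀ (Real.sqrt_pos.2 hN)]
  calc 1 ≤ √(N * x ^ 2) := Real.one_le_sqrt.2 h
    _ = x * √N := by rw [Real.sqrt_mul hN.le, Real.sqrt_sq hx, mul_comm]

theorem IsLatticeVertexSet.exists_intCast_sub {d k : ℕ} {V W : Finset (EuclideanSpace ℝ (Fin d))}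
    (hV : IsLatticeVertexSet d k V) (hW : IsLatticeVertexSet d k W) {a b : EuclideanSpace ℝ (Fin d)}
    (ha : a ∈ V) (hb : b ∈ W) (i : Fin d) : ∃ m : ℤ, |m| ≤ k ∧ (b - a) i = m := by
  obtain ⟨m, hm, hbm⟩ := hW b hb i
  obtain ⟨n, hn, han⟩ := hV a ha i
  exact ⟨m - n, abs_sub_le_iff.2 ⟨by omega, by omega⟩, by simp [hbm, han]⟩

theorem one_le_norm_sq_of_forall_eq_intCast {d : ℕ} {w : EuclideanSpace ℝ (Fin d)} (hw : w ≠ 0)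
    (hint : ∀ i, ∃ m : ℤ, w i = m) : 1 ≤ ‖w‖ ^ 2 := by
  obtain ⟨i, hi⟩ : ∃ i, w i ≠ 0 := by
    by_contra! h
    exact hw (PiLp.ext h)
  obtain ⟨m, hm⟩ := hint i
  have hm₀ : m ≠ 0 := by
    rintro rfl
    simp [hm] at hi
  calc (1 : ℝ) ≤ (m : ℝ) ^ 2 := by
        exact_mod_cast (one_le_sq_iff_one_le_abs m).2 (Int.one_le_abs hm₀)
    _ = ‖w i‖ ^ 2 := by rw [hm, Real.norm_eq_abs, sq_abs]
    _ ≤ ∑ j, ‖w j‖ ^ 2 := Finset.single_le_sum (fun j _ => sq_nonneg ‖w j‖) (Finset.mem_univ i)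
    _ = ‖w‖ ^ 2 := (EuclideanSpace.norm_sq_eq w).symm

theorem sq_add_sq_le_mul_sq_of_abs_le {k : ℕ} (hk : 2 ≤ k) {m₀ m₁ n₀ n₁ : ℤ} (h₀ : |m₀| ≤ k)
    (h₁ : |m₁| ≤ k) (hdet : m₀ * n₁ - m₁ * n₀ ≠ 0) :
    m₀ ^ 2 + m₁ ^ 2 ≤ (((k : ℤ) - 1) ^ 2 + (k : ℤ) ^ 2) * (m₀ * n₁ - m₁ * n₀) ^ 2 := by
  have hdet₁ : 1 ≤ (m₀ * n₁ - m₁ * n₀) ^ 2 := (one_le_sq_iff_one_le_abs _).2 (Int.one_le_abs hdet)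
  rcases eq_or_ne |m₀| |m₁| with h | h
  · -- `m₁ = ± m₀`, so `m₀` divides the determinant
    obtain ⟨t, ht, hdet_eq⟩ : ∃ t : ℤ, t ≠ 0 ∧ m₀ * n₁ - m₁ * n₀ = m₀ * t := by
      rcases abs_eq_abs.1 h with h | h
      · exact ⟨n₁ - n₀, fun ht => hdet (by linear_combination n₁ * h + m₁ * ht),
          by linear_combination n₀ * h⟩
      · exact ⟨n₁ + n₀, fun ht => hdet (by linear_combination n₁ * h - m₁ * ht),
          by linear_combination -n₀ * h⟩
    have ht₁ : 1 ≤ t ^ 2 := (one_le_sq_iff_one_le_abs _).2 (Int.one_le_abs ht)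
    have hm : m₁ ^ 2 = m₀ ^ 2 := by rw [← sq_abs m₁, ← h, sq_abs]
    have hk' : (2 : ℤ) ≤ k := by exact_mod_cast hk
    rw [hdet_eq, hm, mul_pow]
    nlinarith [sq_nonneg m₀, mul_le_mul_of_nonneg_left ht₁ (sq_nonneg m₀)]
  · -- otherwise one of `|m₀|, |m₁|` is at most `k - 1`
    have hsq : m₀ ^ 2 + m₁ ^ 2 ≤ ((k : ℤ) - 1) ^ 2 + (k : ℤ) ^ 2 := by
      rw [← sq_abs m₀, ← sq_abs m₁]
      rcases h.lt_or_gt with h | h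
      · nlinarith [abs_nonneg m₀]
      · nlinarith [abs_nonneg m₁]
    nlinarith

theorem inner_sq_mul_norm_sq_eq_of_inner_eq_zero {v w : ℝ²} (z : ℝ²) (h : ⟪v, w⟫ = 0) :
    ⟪v, z⟫ ^ 2 * ‖w‖ ^ 2 = ‖v‖ ^ 2 * (w 0 * z 1 - w 1 * z 0) ^ 2 := by
  simp only [← real_inner_self_eq_norm_sq, EuclideanSpace.inner_eq_star_dotProduct,
    dotProduct, Fin.sum_univ_two, star_trivial] at h ⊢
  -- `v ⊥ w` makes `v` a multiple of `w` rotated by a right angle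
  linear_combination (v 1 * w 1 * z 1 ^ 2 - v 1 * w 1 * z 0 ^ 2 + 2 * v 1 * w 0 * z 0 * z 1
    + 2 * v 0 * w 1 * z 0 * z 1 - v 0 * w 0 * z 1 ^ 2 + v 0 * w 0 * z 0 ^ 2) * h

theorem one_le_mul_norm_sq_of_inner_eq_zero {k : ℕ} (hk : 2 ≤ k) {v w z : ℝ²} (hv : v ≠ 0)
    (hw : w ≠ 0) (hvw : ⟪v, w⟫ = 0) (hvz : ⟪v, z⟫ = ‖v‖ ^ 2)
    (hwint : ∀ i, ∃ m : ℤ, |m| ≤ k ∧ w i = m)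
    (hzint : ∀ i, ∃ n : ℤ, z i = n) :
    1 ≤ (((k : ℝ) - 1) ^ 2 + (k : ℝ) ^ 2) * ‖v‖ ^ 2 := by
  obtain ⟨m₀, hm₀, hw₀⟩ := hwint 0
  obtain ⟨m₁, hm₁, hw₁⟩ := hwint 1
  obtain ⟨n₀, hz₀⟩ := hzint 0
  obtain ⟨n₁, hz₁⟩ := hzint 1
  have hv₂ : 0 < ‖v‖ ^ 2 := by positivity
  have hw₂ : 0 < ‖w‖ ^ 2 := by positivity
  have hnorm_w : ‖w‖ ^ 2 = m₀ ^ 2 + m₁ ^ 2 := by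
    simp [EuclideanSpace.norm_sq_eq, Fin.sum_univ_two, hw₀, hw₁]
  have hdet_sq : ‖v‖ ^ 2 * ‖w‖ ^ 2 = ((m₀ * n₁ - m₁ * n₀ : ℤ) : ℝ) ^ 2 := by
    have := inner_sq_mul_norm_sq_eq_of_inner_eq_zero z hvw
    rw [hvz, hw₀, hw₁, hz₀, hz₁] at this
    push_cast
    exact mul_left_cancel₀ hv₂.ne' (by linear_combination this)
  have hdet : m₀ * n₁ - m₁ * n₀ ≠ 0 := by
    intro h
    rw [h, Int.cast_zero, zero_pow two_ne_zero] at hdet_sq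
    exact (mul_pos hv₂ hw₂).ne' hdet_sq
  have hint : ((m₀ ^ 2 + m₁ ^ 2 : ℤ) : ℝ) ≤
      ((((k : ℤ) - 1) ^ 2 + (k : ℤ) ^ 2) * (m₀ * n₁ - m₁ * n₀) ^ 2 : ℤ) := by
    exact_mod_cast sq_add_sq_le_mul_sq_of_abs_le hk hm₀ hm₁ hdet
  rw [Int.cast_mul, Int.cast_pow _ 2, ← hdet_sq] at hint
  push_cast at hint
  rw [← hnorm_w] at hint
  exact le_of_mul_le_mul_right (by linarith) hw₂

theorem one_le_mul_norm_sq_of_lattice_edge {k : ℕ} (hk : 2 ≤ k) {U V W : Finset ℝ²}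
    (hU : IsLatticeVertexSet 2 k U) (hV : IsLatticeVertexSet 2 k V)
    (hW : IsLatticeVertexSet 2 k W) {v a b x y : ℝ²} (hv : v ≠ 0) (ha : a ∈ V) (hb : b ∈ W)
    (hab : ⟪v, b - a⟫ = ‖v‖ ^ 2) (hx : x ∈ U) (hy : y ∈ U) (hxy : y ≠ x)
    (hvxy : ⟪v, x⟫ = ⟪v, y⟫) :
    1 ≤ (((k : ℝ) - 1) ^ 2 + (k : ℝ) ^ 2) * ‖v‖ ^ 2 :=
  one_le_mul_norm_sq_of_inner_eq_zero hk hv (sub_ne_zero.2 hxy)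
    (by rw [inner_sub_right, hvxy, sub_self]) hab (hU.exists_intCast_sub hU hx hy)
    fun i => (hV.exists_intCast_sub hW ha hb i).imp fun _ => And.right

theorem one_le_mul_norm_sq_of_mem_convexHull_faces {k : ℕ} (hk : 2 ≤ k) {V W : Finset ℝ²}
    (hV : IsLatticeVertexSet 2 k V) (hW : IsLatticeVertexSet 2 k W) {p q : ℝ²} (hpq : p ≠ q)
    (hp : p ∈ convexHull ℝ (V.filter (⟪q - p, ·⟫ = ⟪q - p, p⟫) : Set ℝ²))
    (hq : q ∈ convexHull ℝ (W.filter (⟪q - p, ·⟫ = ⟪q - p, q⟫) : Set ℝ²)) :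
    1 ≤ (((k : ℝ) - 1) ^ 2 + (k : ℝ) ^ 2) * ‖q - p‖ ^ 2 := by
  have hv : q - p ≠ 0 := sub_ne_zero.2 hpq.symm
  obtain ⟨a, ha⟩ := Finset.coe_nonempty.1 (convexHull_nonempty_iff.1 ⟨p, hp⟩)
  obtain ⟨b, hb⟩ := Finset.coe_nonempty.1 (convexHull_nonempty_iff.1 ⟨q, hq⟩)
  rw [Finset.mem_filter] at ha hb
  have hab : ⟪q - p, b - a⟫ = ‖q - p‖ ^ 2 := by
    rw [inner_sub_right, hb.2, ha.2, ← inner_sub_right, real_inner_self_eq_norm_sq]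
  rcases eq_or_exists_ne_of_mem_convexHull hp a with rfl | ⟨a', ha', hne⟩
  · rcases eq_or_exists_ne_of_mem_convexHull hq b with rfl | ⟨b', hb', hne⟩
    · have hN : (1 : ℝ) ≤ ((k : ℝ) - 1) ^ 2 + (k : ℝ) ^ 2 := by
        have : (2 : ℝ) ≤ k := by exact_mod_cast hk
        nlinarith
      have := one_le_norm_sq_of_forall_eq_intCast hv fun i =>
        (hV.exists_intCast_sub hW ha.1 hb.1 i).imp fun _ => And.right
      nlinarith
    · rw [Finset.mem_coe, Finset.mem_filter] at hb'
      exact one_le_mul_norm_sq_of_lattice_edge hk hW hV hW hv ha.1 hb.1 hab hb.1 hb'.1 hne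
        (hb.2.trans hb'.2.symm)
  · rw [Finset.mem_coe, Finset.mem_filter] at ha'
    exact one_le_mul_norm_sq_of_lattice_edge hk hV hV hW hv ha.1 hb.1 hab ha.1 ha'.1 hne
      (ha.2.trans ha'.2.symm)

theorem one_div_sqrt_le_setDist {k : ℕ} (hk : 2 ≤ k) {V W : Finset ℝ²}
    (hV₀ : V.Nonempty) (hW₀ : W.Nonempty) (hV : IsLatticeVertexSet 2 k V)
    (hW : IsLatticeVertexSet 2 k W)
    (hdisj : Disjoint (convexHull ℝ (V : Set ℝ²)) (convexHull ℝ (W : Set ℝ²))) :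
    1 / √(((k : ℝ) - 1) ^ 2 + (k : ℝ) ^ 2) ≤
      setDist (convexHull ℝ (V : Set ℝ²)) (convexHull ℝ (W : Set ℝ²)) := by
  obtain ⟨p, hp, q, hq, hmin⟩ := exists_forall_dist_le_of_isCompact
    (V.finite_toSet.isCompact_convexHull ℝ) (W.finite_toSet.isCompact_convexHull ℝ)
    (Finset.coe_nonempty.2 hV₀).convexHull (Finset.coe_nonempty.2 hW₀).convexHull
  rw [setDist_eq_dist hp hq hmin, dist_comm, dist_eq_norm]
  refine one_div_sqrt_le_of_one_le_mul_sq (norm_nonneg _) ?_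
  have hpV := mem_convexHull_filter_of_forall_le (f := innerₗ _ (q - p)) hp fun x hx =>
    inner_le_inner_of_forall_dist_le (convex_convexHull ℝ _) hp
      (fun y hy => by simpa only [dist_comm q] using hmin y hy q hq) (subset_convexHull ℝ _ hx)
  have hqW := mem_convexHull_filter_of_forall_le (f := -innerₗ _ (q - p)) hq fun y hy => by
    have := inner_le_inner_of_forall_dist_le (convex_convexHull ℝ _) hq
      (fun x hx => hmin p hp x hx) (subset_convexHull ℝ _ hy)
    simpa only [← neg_sub q p, inner_neg_left, LinearMap.neg_apply, innerₗ_apply_apply] using this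
  simp only [LinearMap.neg_apply, innerₗ_apply_apply, neg_inj] at hqW
  exact one_le_mul_norm_sq_of_mem_convexHull_faces hk hV hW
    (fun h => hdisj.ne_of_mem hp hq h) hpV hqW

theorem dist_one_one_smul (k t : ℝ) (hN : 0 < (k - 1) ^ 2 + k ^ 2) :
    dist !₂[1, 1] (t • !₂[k, k - 1]) = √(((k - 1) ^ 2 + k ^ 2) *
      (t - (2 * k - 1) / ((k - 1) ^ 2 + k ^ 2)) ^ 2 + 1 / ((k - 1) ^ 2 + k ^ 2)) := by
  rw [EuclideanSpace.dist_eq, Fin.sum_univ_two]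
  congr 1
  simp only [PiLp.smul_apply, Real.dist_eq, sq_abs, smul_eq_mul, Matrix.cons_val_zero,
    Matrix.cons_val_one, Matrix.cons_val_fin_one, one_div]
  field_simp
  ring

theorem one_one_notMem_segment (k : ℝ) : !₂[(1 : ℝ), 1] ∉ segment ℝ 0 !₂[k, k - 1] := by
  rw [segment_eq_image]
  rintro ⟨t, -, h⟩
  have h₀ := congrArg (· 0) h
  have h₁ := congrArg (· 1) h
  simp only [smul_zero, zero_add, PiLp.smul_apply, smul_eq_mul, Matrix.cons_val_zero,
    Matrix.cons_val_one, Matrix.cons_val_fin_one] at h₀ h₁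
  have ht : t = 0 := by linear_combination h₀ - h₁
  simp [ht] at h₀

theorem setDist_singleton_segment {k : ℝ} (hk : 1 ≤ k) :
    setDist {!₂[1, 1]} (segment ℝ 0 !₂[k, k - 1]) = 1 / √((k - 1) ^ 2 + k ^ 2) := by
  have hN : 0 < (k - 1) ^ 2 + k ^ 2 := by nlinarith
  have ht₀ : (2 * k - 1) / ((k - 1) ^ 2 + k ^ 2) ∈ Set.Icc (0 : ℝ) 1 :=
    ⟨div_nonneg (by linarith) hN.le, (div_le_one hN).2 (by nlinarith)⟩
  rw [segment_eq_image]
  simp only [smul_zero, zero_add]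
  rw [setDist_eq_dist (Set.mem_singleton _) (Set.mem_image_of_mem _ ht₀),
    dist_one_one_smul k _ hN, sub_self]
  · rw [zero_pow two_ne_zero, mul_zero, zero_add, Real.sqrt_div' _ hN.le, Real.sqrt_one]
  · rintro _ rfl _ ⟨t, -, rfl⟩
    rw [dist_one_one_smul k _ hN, dist_one_one_smul k _ hN, sub_self, zero_pow two_ne_zero,
      mul_zero, zero_add]
    exact Real.sqrt_le_sqrt (le_add_of_nonneg_left (by positivity))

theorem stmt_3 (k : ℕ) (hk : 2 ≤ k) :
    eps 2 k = 1 / Real.sqrt (((k : ℝ) - 1) ^ 2 + (k : ℝ) ^ 2) := by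
  have hk₁ : (1 : ℝ) ≤ k := by exact_mod_cast (by omega : 1 ≤ k)
  refine IsLeast.csInf_eq
    ⟨⟨{!₂[1, 1]}, {0, !₂[(k : ℝ), k - 1]}, by simp, by simp, ?_, ?_, ?_, ?_⟩, ?_⟩
  · simp only [IsLatticeVertexSet, Finset.mem_singleton, forall_eq, Fin.forall_fin_two]
    exact ⟨⟨1, by omega, by simp⟩, ⟨1, by omega, by simp⟩⟩
  · simp only [IsLatticeVertexSet, Finset.mem_insert, Finset.mem_singleton, forall_eq_or_imp,
      forall_eq, Fin.forall_fin_two]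
    exact ⟨⟨⟨0, by omega, by simp⟩, ⟨0, by omega, by simp⟩⟩,
      ⟨k, le_rfl, by simp⟩, ⟨k - 1, by omega, by simp [Nat.cast_sub (by omega : 1 ≤ k)]⟩⟩
  · simpa [convexHull_pair] using one_one_notMem_segment (k : ℝ)
  · simpa [convexHull_pair] using (setDist_singleton_segment hk₁).symm
  · rintro _ ⟨V, W, hV₀, hW₀, hV, hW, hdisj, rfl⟩
    exact one_div_sqrt_le_setDist hk hV₀ hW₀ hV hW hdisj
end

section
/- The Euclidean distance in ℝ³ between the line segment with endpoints (0,0,0) and (3,4,4) and the line segment with endpoints (4,1,2) and (0,4,3) equals 1/(5√42). -/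
open AffineMap Set

theorem setDist_eq_of_isLeast {E : Type*} [PseudoMetricSpace E] {P Q : Set E} {r : ℝ}
    (h : IsLeast (image2 dist P Q) r) : setDist P Q = r :=
  h.csInf_eq

lemma dist_sq_lineMap_eq (s t : ℝ) :
    dist (lineMap ((WithLp.equiv 2 (Fin 3 → ℝ)).symm ![0, 0, 0])
        ((WithLp.equiv 2 (Fin 3 → ℝ)).symm ![3, 4, 4]) s)
      (lineMap ((WithLp.equiv 2 (Fin 3 → ℝ)).symm ![4, 1, 2])
        ((WithLp.equiv 2 (Fin 3 → ℝ)).symm ![0, 4, 3]) t) ^ 2 =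
      (3 * s + 4 * t - 4) ^ 2 + (4 * s - 3 * t - 1) ^ 2 + (4 * s - t - 2) ^ 2 := by
  simp only [EuclideanSpace.dist_sq_eq, Fin.sum_univ_three, lineMap_apply_module, Real.dist_eq,
    sq_abs, WithLp.equiv_symm_apply, PiLp.add_apply, PiLp.smul_apply, smul_eq_mul,
    Matrix.cons_val_zero, Matrix.cons_val_one, Matrix.cons_val]
  ring

lemma gap_sq_eq_sum_sq_add (s t : ℝ) :
    (3 * s + 4 * t - 4) ^ 2 + (4 * s - 3 * t - 1) ^ 2 + (4 * s - t - 2) ^ 2 =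
      (41 * s - 4 * t - 24) ^ 2 / 41 + 1050 / 41 * (t - 547 / 1050) ^ 2 + 1 / 1050 := by
  ring

lemma one_div_five_mul_sqrt_42_sq : (1 / (5 * √42)) ^ 2 = 1 / 1050 := by
  rw [div_pow, mul_pow, Real.sq_sqrt (by norm_num)]
  norm_num

theorem stmt_10 :
    setDist (segment ℝ ((WithLp.equiv 2 (Fin 3 → ℝ)).symm ![0, 0, 0]) ((WithLp.equiv 2 (Fin 3 → ℝ)).symm ![3, 4, 4]))
        (segment ℝ ((WithLp.equiv 2 (Fin 3 → ℝ)).symm ![4, 1, 2]) ((WithLp.equiv 2 (Fin 3 → ℝ)).symm ![0, 4, 3])) =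
      1 / (5 * Real.sqrt 42) := by
  rw [segment_eq_image_lineMap, segment_eq_image_lineMap]
  refine setDist_eq_of_isLeast ⟨?attained, ?lowerBound⟩
  case attained =>
    refine ⟨_, mem_image_of_mem _ (⟨by norm_num, by norm_num⟩ : (334 / 525 : ℝ) ∈ Icc 0 1),
      _, mem_image_of_mem _ (⟨by norm_num, by norm_num⟩ : (547 / 1050 : ℝ) ∈ Icc 0 1), ?_⟩
    rw [← sq_eq_sq₀ dist_nonneg (by positivity), dist_sq_lineMap_eq, one_div_five_mul_sqrt_42_sq]
    norm_num
  case lowerBound =>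
    rintro _ ⟨_, ⟨s, -, rfl⟩, _, ⟨t, -, rfl⟩, rfl⟩
    rw [← pow_le_pow_iff_left₀ (by positivity) dist_nonneg two_ne_zero, dist_sq_lineMap_eq,
      gap_sq_eq_sum_sq_add, one_div_five_mul_sqrt_42_sq]
    exact le_add_of_nonneg_left (by positivity)
end

section
/- For every integer k ≥ 2, the Euclidean distance in ℝ³ between the segment joining (0,0,0) and (k−1,k,k) and the segment joining (k,1,2) and (0,k,k−1) equals 1/√(2(2k²−4k+5)(2k²−2k+1)). -/
open Set RealInnerProductSpace

section ParallelHyperplanes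

variable {E : Type*} [NormedAddCommGroup E] [InnerProductSpace ℝ E]

theorem inner_eq_of_mem_segment {n a b x : E} {c : ℝ} (ha : ⟪n, a⟫ = c) (hb : ⟪n, b⟫ = c)
    (hx : x ∈ segment ℝ a b) : ⟪n, x⟫ = c :=
  (convex_hyperplane (innerₛₗ ℝ n).isLinear c).segment_subset ha hb hx

theorem abs_sub_div_norm_le_dist {n p q : E} {c d : ℝ} (hp : ⟪n, p⟫ = c) (hq : ⟪n, q⟫ = d) :
    |d - c| / ‖n‖ ≤ dist p q := by
  refine div_le_of_le_mul₀ (norm_nonneg n) dist_nonneg ?_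
  rw [← hp, ← hq, ← inner_sub_right, dist_comm, dist_eq_norm, mul_comm]
  exact abs_real_inner_le_norm n (q - p)

end ParallelHyperplanes

noncomputable section

variable (K : ℝ)

/-- `‖u × v‖² = ‖u‖² ‖v‖² - ⟪u, v⟫²` for the directions `u = (K-1, K, K)`, `v = (-K, K-1, K-3)`. -/
def gramDet : ℝ := 2 * (2 * K ^ 2 - 4 * K + 5) * (2 * K ^ 2 - 2 * K + 1)

/-- The cross product `u × v`. -/
def normalVec : EuclideanSpace ℝ (Fin 3) :=
  !₂[-2 * K, -(2 * K ^ 2 - 4 * K + 3), 2 * K ^ 2 - 2 * K + 1]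

/- Parameters of the feet of the common perpendicular of the two lines,
obtained by solving the normal equations. -/
def footFirst : ℝ := (4 * K ^ 4 - 8 * K ^ 3 + 10 * K ^ 2 - K) / gramDet K

def footSecond : ℝ := (4 * K ^ 4 - 12 * K ^ 3 + 22 * K ^ 2 - 17 * K + 7) / gramDet K

theorem gramDet_pos : 0 < gramDet K := by
  have h₁ : 0 < 2 * K ^ 2 - 4 * K + 5 := by nlinarith [sq_nonneg (K - 1)]
  have h₂ : 0 < 2 * K ^ 2 - 2 * K + 1 := by nlinarith [sq_nonneg (2 * K - 1)]
  unfold gramDet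
  positivity

theorem inner_normalVec (a b c : ℝ) :
    ⟪normalVec K, !₂[a, b, c]⟫ =
      -2 * K * a - (2 * K ^ 2 - 4 * K + 3) * b + (2 * K ^ 2 - 2 * K + 1) * c := by
  simp only [normalVec, PiLp.inner_apply, RCLike.inner_apply, Real.ringHom_apply, Fin.sum_univ_three,
    Matrix.cons_val_zero, Matrix.cons_val_one, Matrix.cons_val]
  ring

theorem norm_normalVec : ‖normalVec K‖ = √(gramDet K) := by
  rw [EuclideanSpace.norm_eq, gramDet]
  congr 1
  simp only [normalVec, Real.norm_eq_abs, sq_abs, Fin.sum_univ_three, Matrix.cons_val_zero,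
    Matrix.cons_val_one, Matrix.cons_val]
  ring

theorem footFirst_mem_Icc (hK : 2 ≤ K) : footFirst K ∈ Icc 0 1 := by
  have hg := gramDet_pos K
  constructor
  · apply div_nonneg _ hg.le
    nlinarith [sq_nonneg (K - 2), sq_nonneg K, mul_nonneg (sub_nonneg.2 hK) (sq_nonneg K)]
  · rw [footFirst, div_le_one hg, gramDet]
    nlinarith [sq_nonneg (K - 2), mul_nonneg (sub_nonneg.2 hK) (sq_nonneg (K - 2)),
      mul_nonneg (mul_nonneg (sub_nonneg.2 hK) (sub_nonneg.2 hK)) (sq_nonneg (K - 2)),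
      sq_nonneg (K - 1)]

theorem footSecond_mem_Icc (hK : 2 ≤ K) : footSecond K ∈ Icc 0 1 := by
  have hg := gramDet_pos K
  constructor
  · apply div_nonneg _ hg.le
    nlinarith [sq_nonneg (K - 2), mul_nonneg (sub_nonneg.2 hK) (sq_nonneg (K - 2)),
      sq_nonneg (K - 1)]
  · rw [footSecond, div_le_one hg, gramDet]
    nlinarith [sq_nonneg (K - 2), mul_nonneg (sub_nonneg.2 hK) (sq_nonneg (K - 2)),
      mul_nonneg (mul_nonneg (sub_nonneg.2 hK) (sub_nonneg.2 hK)) (sq_nonneg (K - 2)),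
      sq_nonneg (K - 1)]

theorem lineMap_footFirst_sub_lineMap_footSecond :
    AffineMap.lineMap !₂[0, 0, 0] !₂[K - 1, K, K] (footFirst K)
      - AffineMap.lineMap !₂[K, 1, 2] !₂[0, K, K - 1] (footSecond K)
      = (gramDet K)⁻¹ • normalVec K := by
  have hg := (gramDet_pos K).ne'
  ext i
  fin_cases i <;>
  · simp only [AffineMap.lineMap_apply_module, PiLp.sub_apply, PiLp.add_apply, PiLp.smul_apply,
      smul_eq_mul, footFirst, footSecond, normalVec, Fin.zero_eta, Fin.mk_one, Fin.reduceFinMk,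
      Matrix.cons_val_zero, Matrix.cons_val_one, Matrix.cons_val]
    field_simp
    unfold gramDet
    ring

end

theorem stmt_11 (k : ℤ) (hk : 2 ≤ k) :
    setDist (segment ℝ ((WithLp.equiv 2 (Fin 3 → ℝ)).symm ![0, 0, 0]) ((WithLp.equiv 2 (Fin 3 → ℝ)).symm ![(k : ℝ) - 1, (k : ℝ), (k : ℝ)]))
        (segment ℝ ((WithLp.equiv 2 (Fin 3 → ℝ)).symm ![(k : ℝ), 1, 2]) ((WithLp.equiv 2 (Fin 3 → ℝ)).symm ![0, (k : ℝ), (k : ℝ) - 1])) =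
      1 / Real.sqrt (2 * (2 * (k : ℝ) ^ 2 - 4 * k + 5) * (2 * (k : ℝ) ^ 2 - 2 * k + 1)) := by
  have hK : (2 : ℝ) ≤ k := by exact_mod_cast hk
  simp only [WithLp.equiv_symm_apply]
  change setDist _ _ = 1 / √(gramDet k)
  refine IsLeast.csInf_eq ⟨⟨_, lineMap_mem_segment ℝ _ _ (footFirst_mem_Icc k hK),
    _, lineMap_mem_segment ℝ _ _ (footSecond_mem_Icc k hK), ?_⟩, ?_⟩
  · rw [dist_eq_norm, lineMap_footFirst_sub_lineMap_footSecond, norm_smul, norm_normalVec,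
      Real.norm_of_nonneg (inv_nonneg.2 (gramDet_pos k).le), inv_mul_eq_div, Real.sqrt_div_self']
  · rintro _ ⟨p, hp, q, hq, rfl⟩
    have hp' : ⟪normalVec k, p⟫ = 0 := inner_eq_of_mem_segment
      (by rw [inner_normalVec]; ring) (by rw [inner_normalVec]; ring) hp
    have hq' : ⟪normalVec k, q⟫ = -1 := inner_eq_of_mem_segment
      (by rw [inner_normalVec]; ring) (by rw [inner_normalVec]; ring) hq
    simpa [norm_normalVec] using abs_sub_div_norm_le_dist hp' hq'
end

section
/- The Euclidean distance in ℝ³ between the segment with endpoints (0,0,0) and (2,3,3) and the segment with endpoints (3,2,0) and (0,1,2) equals 1/√299. -/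
/-!
The squared distance between the points with parameters `t` and `s` of the two segments is the
quadratic `22t² + 6ts + 14s² - 24t - 22s + 13`. Completing the square writes it as `1/299` plus a
positive definite form in `(t - 135/299, s - 206/299)`; that centre lies in the unit square of
parameters, so the minimum over the segments is the global minimum `1/299` of the quadratic.
-/

open AffineMap Set

theorem image2_segment_segment {E F γ : Type*} [AddCommGroup E] [Module ℝ E] [AddCommGroup F]
    [Module ℝ F] (f : E → F → γ) (a b : E) (c d : F) :
    image2 f (segment ℝ a b) (segment ℝ c d) =
      image2 (fun t s => f (lineMap a b t) (lineMap c d s)) (Icc (0 : ℝ) 1) (Icc (0 : ℝ) 1) := by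
  rw [segment_eq_image_lineMap, segment_eq_image_lineMap, image2_image_left, image2_image_right]

theorem dist_sq_lineMap (t s : ℝ) :
    dist (lineMap !₂[0, 0, 0] !₂[2, 3, 3] t : EuclideanSpace ℝ (Fin 3))
        (lineMap !₂[3, 2, 0] !₂[0, 1, 2] s) ^ 2 =
      1 / 299 + ((22 * (t - 135 / 299) + 3 * (s - 206 / 299)) ^ 2 + 299 * (s - 206 / 299) ^ 2) / 22 := by
  rw [EuclideanSpace.dist_eq, Real.sq_sqrt (by positivity)]
  simp only [Fin.sum_univ_three, lineMap_apply, vsub_eq_sub, vadd_eq_add, PiLp.add_apply,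
    PiLp.sub_apply, PiLp.smul_apply, smul_eq_mul, Real.dist_eq, sq_abs, Matrix.cons_val_zero,
    Matrix.cons_val_one, Matrix.cons_val]
  ring

theorem isLeast_dist_lineMap :
    IsLeast (image2 (fun t s => dist (lineMap !₂[0, 0, 0] !₂[2, 3, 3] t : EuclideanSpace ℝ (Fin 3))
        (lineMap !₂[3, 2, 0] !₂[0, 1, 2] s)) (Icc (0 : ℝ) 1) (Icc (0 : ℝ) 1)) (1 / √299) := by
  have hsq : (1 / √299) ^ 2 = 1 / 299 := by rw [div_pow, one_pow, Real.sq_sqrt (by norm_num)]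
  constructor
  · refine ⟨135 / 299, ⟨by norm_num, by norm_num⟩, 206 / 299, ⟨by norm_num, by norm_num⟩, ?_⟩
    rw [← sq_eq_sq₀ dist_nonneg (by positivity), dist_sq_lineMap, hsq]
    norm_num
  · rintro _ ⟨t, -, s, -, rfl⟩
    rw [← sq_le_sq₀ (by positivity) dist_nonneg, dist_sq_lineMap, hsq]
    exact le_add_of_nonneg_right (by positivity)

theorem stmt_12 :
    setDist (segment ℝ ((WithLp.equiv 2 (Fin 3 → ℝ)).symm ![0, 0, 0]) ((WithLp.equiv 2 (Fin 3 → ℝ)).symm ![2, 3, 3]))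
        (segment ℝ ((WithLp.equiv 2 (Fin 3 → ℝ)).symm ![3, 2, 0]) ((WithLp.equiv 2 (Fin 3 → ℝ)).symm ![0, 1, 2])) =
      1 / Real.sqrt 299 := by
  rw [setDist, image2_segment_segment]
  exact isLeast_dist_lineMap.csInf_eq
end

section
/- The Euclidean distance in ℝ³ between a main diagonal of the unit cube [0,1]³ (say the segment from (0,0,0) to (1,1,1)) and the disjoint diagonal of the face x₃ = 0 from (1,0,0) to (0,1,0) equals 1/√6. -/
/-!
Parametrise the main diagonal as `(t, t, t)` and the face diagonal as `(1 - s, s, 0)`. The squared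
distance is `3t² + 2s² - 2t - 2s + 1 = 3 (t - 1/3)² + 2 (s - 1/2)² + 1/6`, so it is at least `1/6`,
with equality at `t = 1/3`, `s = 1/2`, which lie inside both segments.
-/

open Set

theorem setDist_eq_of_dist_eq_of_forall_le {E : Type*} [PseudoMetricSpace E] {P Q : Set E}
    {p q : E} {r : ℝ} (hp : p ∈ P) (hq : q ∈ Q) (hpq : dist p q = r)
    (h : ∀ x ∈ P, ∀ y ∈ Q, r ≤ dist x y) : setDist P Q = r :=
  IsLeast.csInf_eq ⟨hpq ▸ mem_image2_of_mem hp hq, forall_mem_image2.2 h⟩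

theorem segment_mainDiagonal :
    segment ℝ (WithLp.toLp 2 (![0, 0, 0] : Fin 3 → ℝ)) (WithLp.toLp 2 ![1, 1, 1]) =
      (fun t : ℝ => WithLp.toLp 2 ![t, t, t]) '' Icc 0 1 := by
  rw [segment_eq_image]
  refine image_congr fun t _ => ?_
  ext i
  fin_cases i <;> simp

theorem segment_faceDiagonal :
    segment ℝ (WithLp.toLp 2 (![1, 0, 0] : Fin 3 → ℝ)) (WithLp.toLp 2 ![0, 1, 0]) =
      (fun s : ℝ => WithLp.toLp 2 ![1 - s, s, 0]) '' Icc 0 1 := by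
  rw [segment_eq_image]
  refine image_congr fun s _ => ?_
  ext i
  fin_cases i <;> simp

theorem dist_mainDiagonal_faceDiagonal (t s : ℝ) :
    dist (WithLp.toLp 2 ![t, t, t]) (WithLp.toLp 2 ![1 - s, s, 0]) =
      √(3 * (t - 1 / 3) ^ 2 + 2 * (s - 1 / 2) ^ 2 + 1 / 6) := by
  rw [EuclideanSpace.dist_eq, Fin.sum_univ_three]
  congr 1
  simp only [Real.dist_eq, sq_abs, Matrix.cons_val_zero, Matrix.cons_val_one, Matrix.cons_val_two,
    Matrix.tail_cons, Matrix.head_cons]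
  ring

theorem stmt_13 :
    setDist (segment ℝ ((WithLp.equiv 2 (Fin 3 → ℝ)).symm ![0, 0, 0]) ((WithLp.equiv 2 (Fin 3 → ℝ)).symm ![1, 1, 1]))
        (segment ℝ ((WithLp.equiv 2 (Fin 3 → ℝ)).symm ![1, 0, 0]) ((WithLp.equiv 2 (Fin 3 → ℝ)).symm ![0, 1, 0])) =
      1 / Real.sqrt 6 := by
  simp only [WithLp.equiv_symm_apply, segment_mainDiagonal, segment_faceDiagonal]
  have h_sqrt : 1 / √6 = √(1 / 6) := by rw [one_div, one_div, Real.sqrt_inv]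
  refine setDist_eq_of_dist_eq_of_forall_le (mem_image_of_mem _ (x := 1 / 3) (by norm_num))
    (mem_image_of_mem _ (x := 1 / 2) (by norm_num)) ?_ ?_
  · rw [dist_mainDiagonal_faceDiagonal, h_sqrt]
    norm_num
  · rintro _ ⟨t, -, rfl⟩ _ ⟨s, -, rfl⟩
    rw [dist_mainDiagonal_faceDiagonal, h_sqrt]
    gcongr
    exact le_add_of_nonneg_left (by positivity)
end

section
/- The Euclidean distance in ℝ⁴ between the segment with endpoints (0,0,0,0) and (1,1,1,1) and the triangle with vertices (1,0,0,0), (0,1,1,0), (0,1,0,1) equals 1/(3√2). -/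
open RealInnerProductSpace

private noncomputable def pt (a b c d : ℝ) : EuclideanSpace ℝ (Fin 4) :=
  (WithLp.equiv 2 (Fin 4 → ℝ)).symm ![a, b, c, d]

private lemma pt_apply (a b c d : ℝ) (i : Fin 4) : pt a b c d i = ![a,b,c,d] i := rfl

private lemma inner_v (x : EuclideanSpace ℝ (Fin 4)) :
    ⟪pt 1 3 (-2) (-2), x⟫ = x 0 + 3 * x 1 - 2 * x 2 - 2 * x 3 := by
  rw [PiLp.inner_apply]
  simp [Fin.sum_univ_four, RCLike.inner_apply, pt_apply]
  ring

private lemma norm_v : ‖pt 1 3 (-2) (-2)‖ = 3 * Real.sqrt 2 := by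
  have hsqrt2 : (3 : ℝ) * Real.sqrt 2 = Real.sqrt 18 := by
    rw [show (18:ℝ) = 9 * 2 by norm_num, Real.sqrt_mul (by norm_num),
      show Real.sqrt 9 = 3 by
        rw [show (9:ℝ) = 3^2 by norm_num, Real.sqrt_sq]; norm_num]
  rw [hsqrt2, EuclideanSpace.norm_eq]
  congr 1
  simp [Fin.sum_univ_four, pt_apply]
  norm_num

theorem stmt_15 :
    setDist
        (segment ℝ ((WithLp.equiv 2 (Fin 4 → ℝ)).symm ![0, 0, 0, 0])
          ((WithLp.equiv 2 (Fin 4 → ℝ)).symm ![1, 1, 1, 1]))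
        (convexHull ℝ {(WithLp.equiv 2 (Fin 4 → ℝ)).symm ![1, 0, 0, 0],
          (WithLp.equiv 2 (Fin 4 → ℝ)).symm ![0, 1, 1, 0],
          (WithLp.equiv 2 (Fin 4 → ℝ)).symm ![0, 1, 0, 1]}) =
      1 / (3 * Real.sqrt 2) := by
  have hpos : (0:ℝ) < 3 * Real.sqrt 2 := by positivity
  show sInf (Set.image2 dist (segment ℝ (pt 0 0 0 0) (pt 1 1 1 1))
      (convexHull ℝ {pt 1 0 0 0, pt 0 1 1 0, pt 0 1 0 1})) = 1 / (3 * Real.sqrt 2)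
  -- the optimal pair
  have hpmem : pt (7/18) (7/18) (7/18) (7/18) ∈ segment ℝ (pt 0 0 0 0) (pt 1 1 1 1) := by
    refine ⟨11/18, 7/18, by norm_num, by norm_num, by norm_num, ?_⟩
    ext i; fin_cases i <;> simp [pt_apply, PiLp.smul_apply, PiLp.add_apply] <;> norm_num
  have hhullconv := convex_convexHull ℝ ({pt 1 0 0 0, pt 0 1 1 0, pt 0 1 0 1} : Set _)
  have hqmem : pt (4/9) (5/9) (5/18) (5/18) ∈
      convexHull ℝ ({pt 1 0 0 0, pt 0 1 1 0, pt 0 1 0 1} : Set _) := by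
    have h1 : pt 1 0 0 0 ∈ convexHull ℝ ({pt 1 0 0 0, pt 0 1 1 0, pt 0 1 0 1} : Set _) :=
      subset_convexHull ℝ _ (by simp)
    have h2 : pt 0 1 1 0 ∈ convexHull ℝ ({pt 1 0 0 0, pt 0 1 1 0, pt 0 1 0 1} : Set _) :=
      subset_convexHull ℝ _ (by simp)
    have h3 : pt 0 1 0 1 ∈ convexHull ℝ ({pt 1 0 0 0, pt 0 1 1 0, pt 0 1 0 1} : Set _) :=
      subset_convexHull ℝ _ (by simp)
    have hm := hhullconv h2 h3 (by norm_num : (0:ℝ) ≤ 1/2) (by norm_num : (0:ℝ) ≤ 1/2)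
      (by norm_num)
    have hq := hhullconv h1 hm (by norm_num : (0:ℝ) ≤ 4/9) (by norm_num : (0:ℝ) ≤ 5/9)
      (by norm_num)
    convert hq using 1
    ext i; fin_cases i <;> simp [pt_apply, PiLp.smul_apply, PiLp.add_apply] <;> norm_num
  have hdist : dist (pt (7/18) (7/18) (7/18) (7/18)) (pt (4/9) (5/9) (5/18) (5/18))
      = 1 / (3 * Real.sqrt 2) := by
    rw [EuclideanSpace.dist_eq]
    have : ∑ i : Fin 4, dist ((pt (7/18) (7/18) (7/18) (7/18)) i)
        ((pt (4/9) (5/9) (5/18) (5/18)) i) ^ 2 = 1/18 := by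
      simp [Fin.sum_univ_four, pt_apply, Real.dist_eq]
      norm_num
    rw [this]
    rw [show (1:ℝ)/18 = 18⁻¹ by norm_num, Real.sqrt_inv]
    rw [show (3:ℝ) * Real.sqrt 2 = Real.sqrt 18 by
      rw [show (18:ℝ) = 9 * 2 by norm_num, Real.sqrt_mul (by norm_num),
        show Real.sqrt 9 = 3 by
          rw [show (9:ℝ) = 3^2 by norm_num, Real.sqrt_sq]; norm_num]]
    rw [one_div]
  have hmem : (1 / (3 * Real.sqrt 2)) ∈ Set.image2 dist
      (segment ℝ (pt 0 0 0 0) (pt 1 1 1 1))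
      (convexHull ℝ ({pt 1 0 0 0, pt 0 1 1 0, pt 0 1 0 1} : Set _)) :=
    ⟨_, hpmem, _, hqmem, hdist⟩
  -- lower bound
  have hlb : ∀ r ∈ Set.image2 dist (segment ℝ (pt 0 0 0 0) (pt 1 1 1 1))
      (convexHull ℝ ({pt 1 0 0 0, pt 0 1 1 0, pt 0 1 0 1} : Set _)),
      1 / (3 * Real.sqrt 2) ≤ r := by
    rintro r ⟨p, hp, q, hq, rfl⟩
    set v : EuclideanSpace ℝ (Fin 4) := pt 1 3 (-2) (-2) with hv
    have hlin : IsLinearMap ℝ (fun x : EuclideanSpace ℝ (Fin 4) => ⟪v, x⟫) :=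
      ⟨fun x y => inner_add_right .., fun c x => real_inner_smul_right ..⟩
    have hfp : ⟪v, p⟫ = 0 := by
      have hconv : Convex ℝ {x : EuclideanSpace ℝ (Fin 4) | ⟪v, x⟫ = 0} :=
        convex_hyperplane hlin 0
      have := hconv.segment_subset (x := pt 0 0 0 0) (y := pt 1 1 1 1)
        (by rw [Set.mem_setOf_eq, hv, inner_v]; simp [pt_apply]; try norm_num)
        (by rw [Set.mem_setOf_eq, hv, inner_v]; simp [pt_apply]; try norm_num) hp
      exact this
    have hfq : ⟪v, q⟫ = 1 := by
      have hconv : Convex ℝ {x : EuclideanSpace ℝ (Fin 4) | ⟪v, x⟫ = 1} :=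
        convex_hyperplane hlin 1
      have hsub : ({pt 1 0 0 0, pt 0 1 1 0, pt 0 1 0 1} : Set _) ⊆
          {x : EuclideanSpace ℝ (Fin 4) | ⟪v, x⟫ = 1} := by
        rintro x (rfl | rfl | rfl) <;>
          · rw [Set.mem_setOf_eq, hv, inner_v]; simp [pt_apply]; try norm_num
      exact convexHull_min hsub hconv hq
    have hcs : (1:ℝ) ≤ ‖v‖ * ‖q - p‖ := by
      calc (1:ℝ) = ⟪v, q - p⟫ := by rw [inner_sub_right, hfp, hfq]; ring
        _ ≤ ‖v‖ * ‖q - p‖ := real_inner_le_norm v (q - p)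
    rw [norm_v] at hcs
    rw [dist_eq_norm, ← norm_sub_rev]
    rw [div_le_iff₀ hpos] at *
    nlinarith [norm_nonneg (q - p)]
  exact le_antisymm (csInf_le ⟨_, hlb⟩ hmem) (le_csInf ⟨_, hmem⟩ hlb)
end

section
/- The Euclidean distance in ℝ⁴ between the segment with endpoints (0,0,0,0) and (1,2,1,2) and the triangle with vertices (2,2,1,0), (0,1,0,2), (0,0,2,1) equals 1/(2√113). -/
open RealInnerProductSpace

theorem setDist_eq_dist_of_forall_le {E : Type*} [PseudoMetricSpace E] {P Q : Set E} {p q : E}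
    (hp : p ∈ P) (hq : q ∈ Q) (h : ∀ x ∈ P, ∀ y ∈ Q, dist p q ≤ dist x y) :
    setDist P Q = dist p q := by
  have hmem : dist p q ∈ Set.image2 dist P Q := ⟨p, hp, q, hq, rfl⟩
  have hlow : dist p q ∈ lowerBounds (Set.image2 dist P Q) := by
    rintro _ ⟨x, hx, y, hy, rfl⟩
    exact h x hx y hy
  exact le_antisymm (csInf_le ⟨_, hlow⟩ hmem) (le_csInf ⟨_, hmem⟩ hlow)

section InnerProductSpace

variable {E : Type*} [NormedAddCommGroup E] [InnerProductSpace ℝ E]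

theorem inner_eq_of_mem_convexHull {s : Set E} {w x : E} {c : ℝ}
    (hs : ∀ y ∈ s, ⟪w, y⟫ = c) (hx : x ∈ convexHull ℝ s) : ⟪w, x⟫ = c :=
  convexHull_min hs (convex_hyperplane (innerₛₗ ℝ w).isLinear c) hx

theorem abs_sub_le_norm_mul_dist {w x y : E} {a b : ℝ} (hx : ⟪w, x⟫ = a) (hy : ⟪w, y⟫ = b) :
    |b - a| ≤ ‖w‖ * dist x y := by
  rw [← hx, ← hy, ← inner_sub_right, dist_comm, dist_eq_norm]
  exact abs_real_inner_le_norm w (y - x)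

theorem setDist_eq_of_inner_eq {P Q : Set E} {w p q : E} {a b c : ℝ}
    (hP : ∀ x ∈ P, ⟪w, x⟫ = a) (hQ : ∀ y ∈ Q, ⟪w, y⟫ = b) (hp : p ∈ P) (hq : q ∈ Q)
    (hpq : q - p = c • w) : setDist P Q = |b - a| / ‖w‖ := by
  have hgap : |b - a| = |c| * ‖w‖ ^ 2 := by
    rw [← hP p hp, ← hQ q hq, ← inner_sub_right, hpq, real_inner_smul_right,
      real_inner_self_eq_norm_sq, abs_mul, abs_pow, abs_norm]
  have hdist : dist p q = |b - a| / ‖w‖ := by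
    rcases eq_or_ne w 0 with rfl | hw
    · rw [smul_zero, sub_eq_zero] at hpq
      simp [hpq]
    · rw [hgap, dist_comm, dist_eq_norm, hpq, norm_smul, Real.norm_eq_abs]
      field_simp [norm_ne_zero_iff.mpr hw]
  rw [setDist_eq_dist_of_forall_le hp hq, hdist]
  intro x hx y hy
  rw [hdist]
  exact div_le_of_le_mul₀ (norm_nonneg _) dist_nonneg
    ((abs_sub_le_norm_mul_dist (hP x hx) (hQ y hy)).trans_eq (mul_comm _ _))

end InnerProductSpace

theorem smul_add_smul_add_smul_mem_convexHull {E : Type*} [AddCommGroup E] [Module ℝ E]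
    {x y z : E} {a b c : ℝ} (ha : 0 ≤ a) (hb : 0 ≤ b) (hc : 0 ≤ c) (habc : a + b + c = 1) :
    a • x + b • y + c • z ∈ convexHull ℝ {x, y, z} := by
  have := (convex_convexHull ℝ {x, y, z}).sum_mem (t := Finset.univ) (w := ![a, b, c])
    (z := ![x, y, z]) (by intro i _; fin_cases i <;> assumption)
    (by simp [Fin.sum_univ_three, habc])
    (by intro i _; apply subset_convexHull; fin_cases i <;> simp)
  simpa [Fin.sum_univ_three] using this

theorem stmt_16 :
    setDist
        (segment ℝ ((WithLp.equiv 2 (Fin 4 → ℝ)).symm ![0, 0, 0, 0])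
          ((WithLp.equiv 2 (Fin 4 → ℝ)).symm ![1, 2, 1, 2]))
        (convexHull ℝ {(WithLp.equiv 2 (Fin 4 → ℝ)).symm ![2, 2, 1, 0],
          (WithLp.equiv 2 (Fin 4 → ℝ)).symm ![0, 1, 0, 2],
          (WithLp.equiv 2 (Fin 4 → ℝ)).symm ![0, 0, 2, 1]}) =
      1 / (2 * Real.sqrt 113) := by
  change setDist (segment ℝ !₂[0, 0, 0, 0] !₂[1, 2, 1, 2])
    (convexHull ℝ {!₂[2, 2, 1, 0], !₂[0, 1, 0, 2], !₂[0, 0, 2, 1]}) = _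
  set w : EuclideanSpace ℝ (Fin 4) := !₂[15, -13, -3, 7]
  have hw : ‖w‖ = 2 * √113 := by
    rw [show 2 * √113 = √452 by
      rw [show (452 : ℝ) = 2 ^ 2 * 113 by norm_num, Real.sqrt_mul (sq_nonneg 2),
        Real.sqrt_sq zero_le_two]]
    norm_num [EuclideanSpace.norm_eq, w, Fin.sum_univ_four,
      Matrix.cons_val_two, Matrix.cons_val_three, Matrix.tail_cons]
  have hS : ∀ x ∈ segment ℝ !₂[0, 0, 0, 0] !₂[1, 2, 1, 2], ⟪w, x⟫ = 0 := by
    rw [← convexHull_pair]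
    refine fun x ↦ inner_eq_of_mem_convexHull ?_
    norm_num [w, PiLp.inner_apply, Fin.sum_univ_four,
      Matrix.cons_val_two, Matrix.cons_val_three, Matrix.tail_cons]
  have hT : ∀ y ∈ convexHull ℝ {!₂[2, 2, 1, 0], !₂[0, 1, 0, 2], !₂[0, 0, 2, 1]}, ⟪w, y⟫ = 1 := by
    refine fun y ↦ inner_eq_of_mem_convexHull ?_
    norm_num [w, PiLp.inner_apply, Fin.sum_univ_four,
      Matrix.cons_val_two, Matrix.cons_val_three, Matrix.tail_cons]
  have hpq : ((144 / 452 : ℝ) • !₂[2, 2, 1, 0] + (245 / 452 : ℝ) • !₂[0, 1, 0, 2] +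
      (63 / 452 : ℝ) • !₂[0, 0, 2, 1]) -
      ((179 / 452 : ℝ) • !₂[0, 0, 0, 0] + (273 / 452 : ℝ) • !₂[1, 2, 1, 2]) =
      (1 / 452 : ℝ) • w := by
    ext i
    fin_cases i <;> norm_num [w]
  rw [setDist_eq_of_inner_eq hS hT ⟨_, _, by norm_num, by norm_num, by norm_num, rfl⟩
    (smul_add_smul_add_smul_mem_convexHull (by norm_num) (by norm_num) (by norm_num)
      (by norm_num)) hpq, hw]
  norm_num
end
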